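/- Let P be a stochastic matrix with rows indexed by a finite set T and columns by a finite set S, and Q a stochastic matrix with rows indexed by S and columns by a finite set U. Then τ(PQ) ≤ τ(P)·τ(Q). -/

import Mathlib

open scoped BigOperators

/-- A stochastic matrix: nonnegative entries, each row sums to 1. -/
def IsStochastic {T S : Type} [Fintype S] (P : T → S → ℝ) : Prop :=
  (∀ t s, 0 ≤ P t s) ∧ ∀ t, ∑ s : S, P t s = 1

/-- The contraction (Dobrushin) coefficient of a matrix:
`τ(P) = (1/2)·max_{t₁,t₂} Σ_s |P t₁ s − P t₂ s|`. -/
noncomputable def contractionCoeff {T S : Type} [Fintype T] [Fintype S]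
    (P : T → S → ℝ) : ℝ :=
  (1 / 2) * ⨆ t₁ : T, ⨆ t₂ : T, ∑ s : S, |P t₁ s - P t₂ s|

/-!
Write the difference of two rows of `P` as `d = d⁺ - d⁻`. Since both rows have sum one,
`δ := ∑ d⁺ = ∑ d⁻ = ½ ∑ |d|`, and then `δ • (d Q) = ∑_{s,s'} d⁺_s d⁻_{s'} (Q_s - Q_{s'})`
is a combination with total weight `δ²` of differences of rows of `Q`, each of `ℓ¹`-norm at
most `2 τ(Q)`. Hence `‖d Q‖₁ ≤ δ · 2 τ(Q) ≤ τ(P) · 2 τ(Q)`.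
-/

open Finset

section ContractionCoeff

variable {T S : Type} [Fintype T] [Fintype S]

lemma sum_abs_sub_le_two_mul_contractionCoeff (P : T → S → ℝ) (t₁ t₂ : T) :
    ∑ s, |P t₁ s - P t₂ s| ≤ 2 * contractionCoeff P := by
  have hbdd : ∀ f : T → ℝ, BddAbove (Set.range f) := fun f => (Set.finite_range f).bddAbove
  have := (le_ciSup (hbdd _) t₂).trans
    (le_ciSup (hbdd fun t₁ => ⨆ t₂, ∑ s, |P t₁ s - P t₂ s|) t₁)
  rw [contractionCoeff]
  linarith

lemma contractionCoeff_le_of_sum_abs_sub_le {P : T → S → ℝ} {c : ℝ} (hc : 0 ≤ c)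
    (h : ∀ t₁ t₂, ∑ s, |P t₁ s - P t₂ s| ≤ 2 * c) : contractionCoeff P ≤ c := by
  have : ⨆ t₁, ⨆ t₂, ∑ s, |P t₁ s - P t₂ s| ≤ 2 * c :=
    Real.iSup_le (fun t₁ => Real.iSup_le (h t₁) (by positivity)) (by positivity)
  rw [contractionCoeff]
  linarith

lemma contractionCoeff_nonneg (P : T → S → ℝ) : 0 ≤ contractionCoeff P :=
  mul_nonneg (by norm_num) <| Real.iSup_nonneg fun _ => Real.iSup_nonneg fun _ =>
    sum_nonneg fun _ _ => abs_nonneg _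

end ContractionCoeff

section SignedCombination

variable {S U : Type} [Fintype S]

lemma sum_posPart_eq_sum_negPart {d : S → ℝ} (hd : ∑ s, d s = 0) :
    ∑ s, (d s)⁺ = ∑ s, (d s)⁻ := by
  have : ∑ s, ((d s)⁺ - (d s)⁻) = 0 := by simpa only [posPart_sub_negPart] using hd
  rwa [sum_sub_distrib, sub_eq_zero] at this

lemma sum_abs_eq_two_mul_sum_posPart {d : S → ℝ} (hd : ∑ s, d s = 0) :
    ∑ s, |d s| = 2 * ∑ s, (d s)⁺ := by
  simp only [← posPart_add_negPart, sum_add_distrib, ← sum_posPart_eq_sum_negPart hd]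
  ring

lemma sum_posPart_mul_sum_mul {d : S → ℝ} (hd : ∑ s, d s = 0) (q : S → ℝ) :
    (∑ s, (d s)⁺) * ∑ s, d s * q s =
      ∑ s, ∑ s', (d s)⁺ * (d s')⁻ * (q s - q s') := by
  have hpos : ∑ s, ∑ s', (d s)⁺ * (d s')⁻ * q s = (∑ s, (d s)⁺ * q s) * ∑ s', (d s')⁻ := by
    rw [sum_mul_sum]
    exact sum_congr rfl fun _ _ => sum_congr rfl fun _ _ => by ring
  have hneg : ∑ s, ∑ s', (d s)⁺ * (d s')⁻ * q s' = (∑ s, (d s)⁺) * ∑ s', (d s')⁻ * q s' := by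
    rw [sum_mul_sum]
    exact sum_congr rfl fun _ _ => sum_congr rfl fun _ _ => by ring
  have hdq : ∑ s, d s * q s = ∑ s, (d s)⁺ * q s - ∑ s, (d s)⁻ * q s := by
    rw [← sum_sub_distrib]
    exact sum_congr rfl fun s _ => by rw [← sub_mul, posPart_sub_negPart]
  simp only [mul_sub, sum_sub_distrib, hpos, hneg, hdq, ← sum_posPart_eq_sum_negPart hd]
  ring

lemma sum_abs_sum_mul_le_of_sum_eq_zero [Fintype U] {d : S → ℝ} (hd : ∑ s, d s = 0) (Q : S → U → ℝ)
    {C : ℝ} (hC : ∀ s s', ∑ u, |Q s u - Q s' u| ≤ C) :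
    ∑ u, |∑ s, d s * Q s u| ≤ (1 / 2 * ∑ s, |d s|) * C := by
  rcases (sum_nonneg fun s _ => posPart_nonneg (d s)).eq_or_lt with hδ0 | hδ0
  · have habs : ∑ s, |d s| = 0 := by rw [sum_abs_eq_two_mul_sum_posPart hd, ← hδ0, mul_zero]
    have hd0 : ∀ s, d s = 0 := fun s =>
      abs_eq_zero.1 <| (sum_eq_zero_iff_of_nonneg fun s _ => abs_nonneg (d s)).1 habs s (mem_univ s)
    simp [hd0]
  rw [sum_abs_eq_two_mul_sum_posPart hd]
  set δ := ∑ s, (d s)⁺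
  have hweight : ∀ s s', 0 ≤ (d s)⁺ * (d s')⁻ := fun s s' =>
    mul_nonneg (posPart_nonneg _) (negPart_nonneg _)
  refine le_of_mul_le_mul_left ?_ hδ0
  calc δ * ∑ u, |∑ s, d s * Q s u|
      = ∑ u, |∑ s, ∑ s', (d s)⁺ * (d s')⁻ * (Q s u - Q s' u)| := by
        rw [mul_sum]
        refine sum_congr rfl fun u _ => ?_
        rw [← sum_posPart_mul_sum_mul hd, abs_mul, abs_of_pos hδ0]
    _ ≤ ∑ u, ∑ s, ∑ s', (d s)⁺ * (d s')⁻ * |Q s u - Q s' u| := by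
        refine sum_le_sum fun u _ => (abs_sum_le_sum_abs _ _).trans <|
          sum_le_sum fun s _ => (abs_sum_le_sum_abs _ _).trans_eq <|
            sum_congr rfl fun s' _ => ?_
        rw [abs_mul, abs_of_nonneg (hweight s s')]
    _ = ∑ s, ∑ s', (d s)⁺ * (d s')⁻ * ∑ u, |Q s u - Q s' u| := by
        rw [sum_comm]
        simp only [mul_sum]
        exact sum_congr rfl fun _ _ => sum_comm
    _ ≤ ∑ s, ∑ s', (d s)⁺ * (d s')⁻ * C :=
        sum_le_sum fun s _ => sum_le_sum fun s' _ =>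
          mul_le_mul_of_nonneg_left (hC s s') (hweight s s')
    _ = δ * ((1 / 2 * (2 * δ)) * C) := by
        simp only [← sum_mul, ← sum_mul_sum, ← sum_posPart_eq_sum_negPart hd]
        ring

end SignedCombination

theorem stmt13 {T S U : Type} [Fintype T] [Fintype S] [Fintype U]
    (P : T → S → ℝ) (Q : S → U → ℝ)
    (hP : IsStochastic P) :
    contractionCoeff (fun t u => ∑ s : S, P t s * Q s u) ≤
      contractionCoeff P * contractionCoeff Q := by
  refine contractionCoeff_le_of_sum_abs_sub_le
    (mul_nonneg (contractionCoeff_nonneg P) (contractionCoeff_nonneg Q)) fun t₁ t₂ => ?_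
  have hd : ∑ s, (P t₁ s - P t₂ s) = 0 := by rw [sum_sub_distrib, hP.2, hP.2, sub_self]
  calc ∑ u, |∑ s, P t₁ s * Q s u - ∑ s, P t₂ s * Q s u|
      = ∑ u, |∑ s, (P t₁ s - P t₂ s) * Q s u| := by simp only [sub_mul, sum_sub_distrib]
    _ ≤ (1 / 2 * ∑ s, |P t₁ s - P t₂ s|) * (2 * contractionCoeff Q) :=
        sum_abs_sum_mul_le_of_sum_eq_zero hd Q (sum_abs_sub_le_two_mul_contractionCoeff Q)
    _ ≤ (1 / 2 * (2 * contractionCoeff P)) * (2 * contractionCoeff Q) := by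
        gcongr
        · linarith [contractionCoeff_nonneg Q]
        · exact sum_abs_sub_le_two_mul_contractionCoeff P t₁ t₂
    _ = 2 * (contractionCoeff P * contractionCoeff Q) := by ring
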